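/- Fix positive integers n, a_1, …, a_n and a positive rational number q. The set of tuples (x_1, …, x_n) of positive integers satisfying a_1/x_1 + ⋯ + a_n/x_n = q is finite. -/

import Mathlib

/-!
Induction on `n`. In a solution the smallest denominator `x i` satisfies
`q = ∑ a j / x j ≤ (∑ a j) / x i`, so it is bounded by `(∑ a j) / q`. Fixing the index `i` and
the value `k = x i` of the smallest denominator leaves a solution of the same equation in
`n - 1` unknowns with right-hand side `q - a i / k`, and there are finitely many choices of
`(i, k)`.
-/

open Finset

section

variable {K : Type*} [Field K]

def sumDivSolutions {n : ℕ} (a : Fin n → K) (q : K) : Set (Fin n → ℕ) :=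
  {x | (∀ i, 0 < x i) ∧ ∑ i, a i / x i = q}

theorem removeNth_mem_sumDivSolutions {n : ℕ} {a : Fin (n + 1) → K} {q : K} {x : Fin (n + 1) → ℕ}
    (hx : x ∈ sumDivSolutions a q) (i : Fin (n + 1)) :
    i.removeNth x ∈ sumDivSolutions (i.removeNth a) (q - a i / x i) := by
  obtain ⟨hpos, hsum⟩ := hx
  refine ⟨fun j => hpos _, ?_⟩
  rw [← hsum, Fin.sum_univ_succAbove _ i, add_sub_cancel_left]
  rfl

variable [LinearOrder K] [IsStrictOrderedRing K]

theorem exists_mul_le_sum_of_sum_div_eq {ι : Type*} [Fintype ι] [Nonempty ι] {a : ι → K}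
    (ha : ∀ i, 0 ≤ a i) {x : ι → ℕ} (hx : ∀ i, 0 < x i) {q : K} (hsum : ∑ i, a i / x i = q) :
    ∃ i, x i * q ≤ ∑ j, a j := by
  obtain ⟨i, hmin⟩ := Finite.exists_min x
  have hxi : (0 : K) < x i := by exact_mod_cast hx i
  refine ⟨i, (le_div_iff₀' hxi).mp ?_⟩
  calc q = ∑ j, a j / x j := hsum.symm
    _ ≤ ∑ j, a j / x i := by
        gcongr with j
        · exact ha j
        · exact_mod_cast hmin j
    _ = (∑ j, a j) / x i := (sum_div ..).symm

variable [Archimedean K]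

theorem sumDivSolutions_finite {n : ℕ} {a : Fin n → K} (ha : ∀ i, 0 < a i) (q : K) :
    (sumDivSolutions a q).Finite := by
  induction n generalizing q with
  | zero => exact Set.subsingleton_of_subsingleton.finite
  | succ n ih =>
    obtain ⟨N, hN⟩ := exists_nat_ge ((∑ j, a j) / q)
    have hcover : sumDivSolutions a q ⊆ ⋃ i, ⋃ k ∈ Set.Iic N,
        Fin.insertNth (α := fun _ => ℕ) i k '' sumDivSolutions (i.removeNth a) (q - a i / k) := by
      intro x hx
      obtain ⟨i, hi⟩ := exists_mul_le_sum_of_sum_div_eq (fun j => (ha j).le) hx.1 hx.2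
      have hq : 0 < q := hx.2 ▸ sum_pos (fun j _ => div_pos (ha j) (by exact_mod_cast hx.1 j))
        univ_nonempty
      have hxi : x i ≤ N := by exact_mod_cast ((le_div_iff₀ hq).mpr hi).trans hN
      simp only [Set.mem_iUnion]
      exact ⟨i, x i, hxi, _, removeNth_mem_sumDivSolutions hx i, Fin.insertNth_self_removeNth i x⟩
    exact (Set.finite_iUnion fun i => (Set.finite_Iic N).biUnion fun k _ =>
      (ih (fun j => ha _) _).image _).subset hcover

end

theorem stmt_6_general (n : ℕ) (a : Fin n → ℕ) (ha : ∀ i, 0 < a i)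
    (q : ℚ) :
    {x : Fin n → ℕ | (∀ i, 0 < x i) ∧ ∑ i, (a i : ℚ) / (x i : ℚ) = q}.Finite :=
  sumDivSolutions_finite (fun i => Nat.cast_pos.mpr (ha i)) q

theorem stmt_6 (n : ℕ) (hn : 0 < n) (a : Fin n → ℕ) (ha : ∀ i, 0 < a i)
    (q : ℚ) (hq : 0 < q) :
    {x : Fin n → ℕ | (∀ i, 0 < x i) ∧ ∑ i, (a i : ℚ) / (x i : ℚ) = q}.Finite :=
  stmt_6_general n a ha q
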